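/- Fix c, q ∈ ℂ. In the field of rational functions in the variables w_ℓ (ℓ ∈ ℤ) with shift S, let D̃_t be the total derivative for the equation ∂_t(w) = w_0 (w_2 w_1 − w_{−1} w_{−2}) (c w_{−1} w_0 − q)(c w_0 w_1 − q)(q w_0 + c) / ((w_{−2} w_{−1} w_0 + 1)(w_{−1} w_0 w_1 + 1)(w_0 w_1 w_2 + 1)). Then Φ := (q w_2 + c)/(w_0 w_1 w_2 + 1) − c satisfies D̃_t(Φ) = Φ·(Φ + c)·( S²(Φ)·S(Φ) − S^{-1}(Φ)·S^{-2}(Φ) ); that is, u_0 = (q w_2 + c)/(w_0 w_1 w_2 + 1) − c is a Miura-type transformation from this equation to the modified Narita–Itoh–Bogoyavlensky equation ∂_t(u) = u_0(u_0 + c)(u_2 u_1 − u_{−1} u_{−2}). -/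

import Mathlib

/-!
Setup: `K1` is the field of rational functions over `ℂ` in the commuting
variables `w_ℓ` (`ℓ : ℤ`), realized as the fraction field of the multivariate
polynomial ring.  `S1` is the shift automorphism `S` (fixing `ℂ`, sending
`w_ℓ` to `w_{ℓ+1}`), and `Sz ℓ = S^ℓ`.
-/

set_option maxHeartbeats 1000000

noncomputable section

open MvPolynomial

abbrev R1 : Type := MvPolynomial ℤ ℂ
abbrev K1 : Type := FractionRing R1

def w (ℓ : ℤ) : K1 := algebraMap R1 K1 (X ℓ)

/-- The shift automorphism `S` of the field `K1`. -/
def S1 : RingAut K1 :=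
  IsFractionRing.ringEquivOfRingEquiv
    ((renameEquiv ℂ (Equiv.addRight (1:ℤ))).toRingEquiv)

/-- `Sz ℓ = S^ℓ`. -/
def Sz (ℓ : ℤ) : K1 ≃+* K1 := S1 ^ ℓ

/-!
After the quotient rule, both sides are rational functions of `w_{-2}, …, w_4` whose only
denominators are the five nonvanishing `w_i w_{i+1} w_{i+2} + 1`, `-2 ≤ i ≤ 2`; clearing them
leaves a polynomial identity. The shift is handled by evaluating the computation, done over an
arbitrary field, at the reindexed sequences `i ↦ w_{i+n}`.
-/

theorem RingAut.zpow_apply_of_apply_eq_shift {R : Type*} [Semiring R] (f : RingAut R)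
    (x : ℤ → R) (hf : ∀ ℓ, f (x ℓ) = x (ℓ + 1)) (n ℓ : ℤ) : (f ^ n) (x ℓ) = x (ℓ + n) := by
  induction n using Int.induction_on generalizing ℓ with
  | zero => simp
  | succ k ih => rw [zpow_add_one, RingAut.mul_apply, hf, ih, add_right_comm, add_assoc]
  | pred k ih =>
    have hsymm : f.symm (x ℓ) = x (ℓ - 1) := f.symm_apply_eq.mpr (by rw [hf, sub_add_cancel])
    rw [zpow_sub_one, RingAut.mul_apply, RingAut.inv_apply, hsymm, ih, sub_add_eq_add_sub,
      add_sub_assoc]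

section Field

variable {K : Type*} [Field K]

def sourceFlow (c q : K) (v : ℤ → K) : K :=
  v 0 * (v 2 * v 1 - v (-1) * v (-2)) * (c * v (-1) * v 0 - q) * (c * v 0 * v 1 - q) *
      (q * v 0 + c) /
    ((v (-2) * v (-1) * v 0 + 1) * (v (-1) * v 0 * v 1 + 1) * (v 0 * v 1 * v 2 + 1))

def miuraMap (c q : K) (v : ℤ → K) : K :=
  (q * v 2 + c) / (v 0 * v 1 * v 2 + 1) - c

def modifiedNIBFlow (c : K) (u : ℤ → K) : K :=
  u 0 * (u 0 + c) * (u 2 * u 1 - u (-1) * u (-2))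

/-- `hD` is the defining rule `D̃ₜ(w_n) = Sⁿ(H)` of the total derivative, with `Sⁿ` realized as
reindexing `v` by `n`. -/
theorem Derivation.map_miuraMap {k : Type*} [CommRing k] [Algebra k K]
    (D : Derivation k K K) (c q : k) (v : ℤ → K)
    (hv : ∀ i, v i * v (i + 1) * v (i + 2) + 1 ≠ 0)
    (hD : ∀ n, D (v n) = sourceFlow (algebraMap k K c) (algebraMap k K q) (fun i ↦ v (i + n))) :
    D (miuraMap (algebraMap k K c) (algebraMap k K q) v) =
      modifiedNIBFlow (algebraMap k K c)
        (fun n ↦ miuraMap (algebraMap k K c) (algebraMap k K q) (fun i ↦ v (i + n))) := by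
  simp only [miuraMap, modifiedNIBFlow, sourceFlow, map_sub, Derivation.leibniz_div, Derivation.leibniz,
    map_add, Derivation.map_one_eq_zero, Derivation.map_algebraMap, hD, smul_eq_mul,
    Int.reduceAdd, zero_add, mul_zero, add_zero, sub_zero, sub_add_cancel]
  -- Naming the denominators keeps `field_simp` from reordering them out of sight of `hv`.
  set A := v (-2) * v (-1) * v 0 + 1
  set B := v (-1) * v 0 * v 1 + 1
  set C := v 0 * v 1 * v 2 + 1
  set E := v 1 * v 2 * v 3 + 1
  set F := v 2 * v 3 * v 4 + 1
  have hA : A ≠ 0 := hv (-2)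
  have hB : B ≠ 0 := hv (-1)
  have hC : C ≠ 0 := hv 0
  have hE : E ≠ 0 := hv 1
  have hF : F ≠ 0 := hv 2
  field_simp
  simp only [A, B, C, E, F]
  ring

end Field

theorem S1_w (ℓ : ℤ) : S1 (w ℓ) = w (ℓ + 1) := by
  simp [S1, w]

theorem S1_algebraMap (a : ℂ) : S1 (algebraMap ℂ K1 a) = algebraMap ℂ K1 a := by
  simp [S1, IsScalarTower.algebraMap_apply ℂ R1 K1]

theorem Sz_w (n ℓ : ℤ) : Sz n (w ℓ) = w (ℓ + n) :=
  S1.zpow_apply_of_apply_eq_shift w S1_w n ℓ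

theorem Sz_algebraMap (n : ℤ) (a : ℂ) : Sz n (algebraMap ℂ K1 a) = algebraMap ℂ K1 a :=
  have hS1 : S1 ∈ MulAction.stabilizer (RingAut K1) (algebraMap ℂ K1 a) := S1_algebraMap a
  zpow_mem hS1 n

theorem w_mul_w_mul_w_add_one_ne_zero (i j k : ℤ) : w i * w j * w k + 1 ≠ 0 := by
  have hX : (X i * X j * X k + 1 : R1) ≠ 0 := fun h ↦ by simpa using congrArg constantCoeff h
  simpa [w] using (map_ne_zero_iff _ (IsFractionRing.injective R1 K1)).mpr hX

theorem Sz_sourceFlow (c q : ℂ) (n : ℤ) :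
    Sz n (sourceFlow (algebraMap ℂ K1 c) (algebraMap ℂ K1 q) w) =
      sourceFlow (algebraMap ℂ K1 c) (algebraMap ℂ K1 q) (fun i ↦ w (i + n)) := by
  simp only [sourceFlow, map_div₀, map_mul, map_sub, map_add, map_one, Sz_w, Sz_algebraMap]

theorem Sz_miuraMap (c q : ℂ) (n : ℤ) :
    Sz n (miuraMap (algebraMap ℂ K1 c) (algebraMap ℂ K1 q) w) =
      miuraMap (algebraMap ℂ K1 c) (algebraMap ℂ K1 q) (fun i ↦ w (i + n)) := by
  simp only [miuraMap, map_div₀, map_mul, map_sub, map_add, map_one, Sz_w, Sz_algebraMap]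

/-- `Φ = (q w_2 + c)/(w_0 w_1 w_2 + 1) − c` is a Miura-type
transformation from the equation
`∂ₜ(w) = w_0 (w_2 w_1 − w_{−1} w_{−2})(c w_{−1} w_0 − q)(c w_0 w_1 − q)(q w_0 + c)
/ ((w_{−2} w_{−1} w_0 + 1)(w_{−1} w_0 w_1 + 1)(w_0 w_1 w_2 + 1))`
to the modified Narita–Itoh–Bogoyavlensky equation
`∂ₜ(u) = u_0(u_0 + c)(u_2 u_1 − u_{−1} u_{−2})`, i.e.
`D̃_t(Φ) = Φ·(Φ + c)·(S²(Φ)·S(Φ) − S⁻¹(Φ)·S⁻²(Φ))`. -/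
theorem statement16 (c q : ℂ)
    -- the total derivative `D̃_t` for the equation above:
    (Dt : Derivation ℂ K1 K1)
    (hDtw : ∀ ℓ : ℤ,
      Dt (w ℓ) = Sz ℓ
        (w 0 * (w 2 * w 1 - w (-1) * w (-2)) *
          (algebraMap ℂ K1 c * w (-1) * w 0 - algebraMap ℂ K1 q) *
          (algebraMap ℂ K1 c * w 0 * w 1 - algebraMap ℂ K1 q) *
          (algebraMap ℂ K1 q * w 0 + algebraMap ℂ K1 c) /
          ((w (-2) * w (-1) * w 0 + 1) * (w (-1) * w 0 * w 1 + 1) * (w 0 * w 1 * w 2 + 1)))) :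
    Dt ((algebraMap ℂ K1 q * w 2 + algebraMap ℂ K1 c) / (w 0 * w 1 * w 2 + 1) -
        algebraMap ℂ K1 c) =
      ((algebraMap ℂ K1 q * w 2 + algebraMap ℂ K1 c) / (w 0 * w 1 * w 2 + 1) -
          algebraMap ℂ K1 c) *
        ((algebraMap ℂ K1 q * w 2 + algebraMap ℂ K1 c) / (w 0 * w 1 * w 2 + 1) -
            algebraMap ℂ K1 c + algebraMap ℂ K1 c) *
        (Sz 2 ((algebraMap ℂ K1 q * w 2 + algebraMap ℂ K1 c) / (w 0 * w 1 * w 2 + 1) -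
              algebraMap ℂ K1 c) *
            Sz 1 ((algebraMap ℂ K1 q * w 2 + algebraMap ℂ K1 c) / (w 0 * w 1 * w 2 + 1) -
              algebraMap ℂ K1 c) -
          Sz (-1) ((algebraMap ℂ K1 q * w 2 + algebraMap ℂ K1 c) / (w 0 * w 1 * w 2 + 1) -
              algebraMap ℂ K1 c) *
            Sz (-2) ((algebraMap ℂ K1 q * w 2 + algebraMap ℂ K1 c) / (w 0 * w 1 * w 2 + 1) -
              algebraMap ℂ K1 c)) := by
  have hD (n : ℤ) :
      Dt (w n) = sourceFlow (algebraMap ℂ K1 c) (algebraMap ℂ K1 q) (fun i ↦ w (i + n)) :=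
    (hDtw n).trans (Sz_sourceFlow c q n)
  have key := Dt.map_miuraMap c q w (fun i ↦ w_mul_w_mul_w_add_one_ne_zero _ _ _) hD
  simp only [modifiedNIBFlow, add_zero, ← Sz_miuraMap] at key
  exact key
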